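/- The measure μ on [0,1] with density 1/(x(1-x)) with respect to Lebesgue measure is invariant for the Romik map R: for every Borel set A ⊆ [0,1], μ(R⁻¹(A)) = μ(A). -/

import Mathlib

/-!
The density ρ(x) = 1/(x(1-x)) is a fixed point of the transfer operator of the Romik map. The
map has three inverse branches y/(1+2y), 1/(y+2), 1/(2-y), mapping [0,1] onto [0,1/3],
[1/3,1/2], [1/2,1], and for 0 < y < 1

  |g₁'(y)| ρ(g₁ y) + |g₂'(y)| ρ(g₂ y) + |g₃'(y)| ρ(g₃ y) = 1/(y(1+y)) + 1/(1+y) + 1/(1-y) = ρ(y).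

Cutting R⁻¹(A) ∩ [0,1] along the three intervals (they only share null endpoints), writing each
piece as gᵢ(A) and changing variables turns μ(R⁻¹ A) into ∫_A ρ = μ(A).
-/

open MeasureTheory

noncomputable def romik (x : ℝ) : ℝ :=
  if x < 1/3 then x / (1 - 2*x) else if x < 1/2 then 1/x - 2 else 2 - 1/x

noncomputable def romikMeasure : Measure ℝ :=
  (volume.restrict (Set.Icc (0 : ℝ) 1)).withDensity
    (fun x => ENNReal.ofReal (1 / (x * (1 - x))))

open Set

theorem measure_inter_Icc_add_inter_Icc {μ : Measure ℝ} [NullSingletonClass μ] {s : Set ℝ}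
    (hs : MeasurableSet s) {a b c : ℝ} (hab : a ≤ b) (hbc : b ≤ c) :
    μ (s ∩ Icc a b) + μ (s ∩ Icc b c) = μ (s ∩ Icc a c) := by
  have hnull : AEDisjoint μ (s ∩ Icc a b) (s ∩ Icc b c) :=
    measure_mono_null (fun x hx => le_antisymm hx.1.2.2 hx.2.2.1) (measure_singleton b)
  rw [← Icc_union_Icc_eq_Icc hab hbc, inter_union_distrib_left,
    measure_union₀ (hs.inter measurableSet_Icc).nullMeasurableSet hnull]

noncomputable def romikDensity (x : ℝ) : ℝ := 1 / (x * (1 - x))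

@[fun_prop]
theorem measurable_romikDensity : Measurable romikDensity := by
  unfold romikDensity
  fun_prop

theorem romikDensity_nonneg {x : ℝ} (hx : x ∈ Icc 0 1) : 0 ≤ romikDensity x :=
  div_nonneg zero_le_one (mul_nonneg hx.1 (sub_nonneg.2 hx.2))

theorem romikMeasure_apply (s : Set ℝ) :
    romikMeasure s = ∫⁻ x in s ∩ Icc 0 1, ENNReal.ofReal (romikDensity x) := by
  rw [romikMeasure, withDensity_apply', Measure.restrict_restrict' measurableSet_Icc]
  rfl

theorem romikMeasure_inter_Icc (s : Set ℝ) : romikMeasure (s ∩ Icc 0 1) = romikMeasure s := by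
  rw [romikMeasure_apply, romikMeasure_apply, inter_assoc, inter_self]

instance : NullSingletonClass romikMeasure := by
  unfold romikMeasure
  infer_instance

theorem measurable_romik : Measurable romik := by
  unfold romik
  refine Measurable.ite measurableSet_Iio ?_ (Measurable.ite measurableSet_Iio ?_ ?_) <;> fun_prop

theorem romik_of_le_third {x : ℝ} (hx : x ≤ 1/3) : romik x = x / (1 - 2*x) := by
  rcases hx.lt_or_eq with hx | rfl
  · exact if_pos hx
  · norm_num [romik]

theorem romik_of_mem_Icc_third_half {x : ℝ} (hx : x ∈ Icc (1/3) (1/2)) : romik x = 1/x - 2 := by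
  rcases hx.2.lt_or_eq with hx' | rfl
  · rw [romik, if_neg hx.1.not_gt, if_pos hx']
  · norm_num [romik]

theorem romik_of_half_le {x : ℝ} (hx : 1/2 ≤ x) : romik x = 2 - 1/x := by
  rw [romik, if_neg (by linarith), if_neg hx.not_gt]

structure IsRomikBranch (g g' : ℝ → ℝ) (a b : ℝ) : Prop where
  Icc_subset : Icc a b ⊆ Icc 0 1
  mapsTo : MapsTo g (Icc 0 1) (Icc a b)
  romik_comp : LeftInvOn romik g (Icc 0 1)
  comp_romik : LeftInvOn g romik (Icc a b)
  hasDerivAt : ∀ y ∈ Icc (0 : ℝ) 1, HasDerivAt g (g' y) y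

namespace IsRomikBranch

variable {g g' : ℝ → ℝ} {a b : ℝ} {A : Set ℝ}

theorem preimage_inter_Icc (hg : IsRomikBranch g g' a b) (hA : A ⊆ Icc 0 1) :
    romik ⁻¹' A ∩ Icc a b = g '' A := by
  ext x
  constructor
  · rintro ⟨hxA, hx⟩
    exact ⟨romik x, hxA, hg.comp_romik hx⟩
  · rintro ⟨y, hy, rfl⟩
    exact ⟨by rwa [mem_preimage, hg.romik_comp (hA hy)], hg.mapsTo (hA hy)⟩

theorem romikMeasure_image (hg : IsRomikBranch g g' a b) (hA : MeasurableSet A)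
    (hAI : A ⊆ Icc 0 1) :
    romikMeasure (g '' A) = ∫⁻ y in A, ENNReal.ofReal (|g' y| * romikDensity (g y)) := by
  have himage : g '' A ⊆ Icc 0 1 := ((hg.mapsTo.mono_left hAI).image_subset).trans hg.Icc_subset
  rw [romikMeasure_apply, inter_eq_left.2 himage,
    lintegral_image_eq_lintegral_abs_deriv_mul hA
      (fun y hy => (hg.hasDerivAt y (hAI hy)).hasDerivWithinAt)
      ((hg.romik_comp.mono hAI).injOn)]
  simp_rw [ENNReal.ofReal_mul (abs_nonneg _)]

theorem abs_deriv_mul_romikDensity_nonneg (hg : IsRomikBranch g g' a b) {y : ℝ}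
    (hy : y ∈ Icc 0 1) : 0 ≤ |g' y| * romikDensity (g y) :=
  mul_nonneg (abs_nonneg _) (romikDensity_nonneg (hg.Icc_subset (hg.mapsTo hy)))

end IsRomikBranch

noncomputable def romikInv₁ (y : ℝ) : ℝ := y / (1 + 2*y)

noncomputable def romikInv₂ (y : ℝ) : ℝ := 1 / (y + 2)

noncomputable def romikInv₃ (y : ℝ) : ℝ := 1 / (2 - y)

@[fun_prop]
theorem measurable_romikInv₁ : Measurable romikInv₁ := by
  unfold romikInv₁
  fun_prop

@[fun_prop]
theorem measurable_romikInv₂ : Measurable romikInv₂ := by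
  unfold romikInv₂
  fun_prop

theorem mapsTo_romikInv₁ : MapsTo romikInv₁ (Icc 0 1) (Icc 0 (1/3)) := fun y hy => by
  have : 0 < 1 + 2*y := by linarith [hy.1]
  refine ⟨div_nonneg hy.1 this.le, ?_⟩
  rw [romikInv₁, div_le_iff₀ this]
  linarith [hy.2]

theorem mapsTo_romikInv₂ : MapsTo romikInv₂ (Icc 0 1) (Icc (1/3) (1/2)) := fun y hy => by
  have : 0 < y + 2 := by linarith [hy.1]
  constructor
  · rw [romikInv₂, div_le_div_iff₀ (by norm_num) this]
    linarith [hy.2]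
  · rw [romikInv₂, div_le_div_iff₀ this (by norm_num)]
    linarith [hy.1]

theorem mapsTo_romikInv₃ : MapsTo romikInv₃ (Icc 0 1) (Icc (1/2) 1) := fun y hy => by
  have : 0 < 2 - y := by linarith [hy.2]
  constructor
  · rw [romikInv₃, div_le_div_iff₀ (by norm_num) this]
    linarith [hy.1]
  · rw [romikInv₃, div_le_one this]
    linarith [hy.2]

theorem isRomikBranch_romikInv₁ :
    IsRomikBranch romikInv₁ (fun y => 1 / (1 + 2*y)^2) 0 (1/3) where
  Icc_subset := Icc_subset_Icc le_rfl (by norm_num)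
  mapsTo := mapsTo_romikInv₁
  romik_comp y hy := by
    have h : 1 + 2*y ≠ 0 := by linarith [hy.1]
    have e : 1 - 2 * (y / (1 + 2*y)) = 1 / (1 + 2*y) := by field_simp; ring
    rw [romik_of_le_third (mapsTo_romikInv₁ hy).2, romikInv₁, e, div_div, mul_one_div_cancel h,
      div_one]
  comp_romik x hx := by
    have h : 1 - 2*x ≠ 0 := by linarith [hx.2]
    have e : 1 + 2 * (x / (1 - 2*x)) = 1 / (1 - 2*x) := by field_simp; ring
    rw [romik_of_le_third hx.2, romikInv₁, e, div_div, mul_one_div_cancel h, div_one]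
  hasDerivAt y hy := by
    have h : 1 + 2*y ≠ 0 := by linarith [hy.1]
    refine ((hasDerivAt_id' y).div (((hasDerivAt_id' y).const_mul 2).const_add 1) h).congr_deriv ?_
    field_simp
    ring

theorem isRomikBranch_romikInv₂ :
    IsRomikBranch romikInv₂ (fun y => -1 / (y + 2)^2) (1/3) (1/2) where
  Icc_subset := Icc_subset_Icc (by norm_num) (by norm_num)
  mapsTo := mapsTo_romikInv₂
  romik_comp y hy := by
    rw [romik_of_mem_Icc_third_half (mapsTo_romikInv₂ hy), romikInv₂, one_div_one_div]
    ring
  comp_romik x hx := by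
    rw [romik_of_mem_Icc_third_half hx, romikInv₂, sub_add_cancel, one_div_one_div]
  hasDerivAt y hy := by
    have h : y + 2 ≠ 0 := by linarith [hy.1]
    refine ((hasDerivAt_const y 1).div ((hasDerivAt_id' y).add_const 2) h).congr_deriv ?_
    ring

theorem isRomikBranch_romikInv₃ :
    IsRomikBranch romikInv₃ (fun y => 1 / (2 - y)^2) (1/2) 1 where
  Icc_subset := Icc_subset_Icc (by norm_num) le_rfl
  mapsTo := mapsTo_romikInv₃
  romik_comp y hy := by
    rw [romik_of_half_le (mapsTo_romikInv₃ hy).1, romikInv₃, one_div_one_div]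
    ring
  comp_romik x hx := by
    rw [romik_of_half_le hx.1, romikInv₃, sub_sub_cancel, one_div_one_div]
  hasDerivAt y hy := by
    have h : 2 - y ≠ 0 := by linarith [hy.2]
    refine ((hasDerivAt_const y 1).div ((hasDerivAt_id' y).const_sub 2) h).congr_deriv ?_
    ring

theorem romikDensity_transfer {y : ℝ} (hy : y ∈ Ioo 0 1) :
    |1 / (1 + 2*y)^2| * romikDensity (romikInv₁ y) + |-1 / (y + 2)^2| * romikDensity (romikInv₂ y)
      + |1 / (2 - y)^2| * romikDensity (romikInv₃ y) = romikDensity y := by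
  obtain ⟨h0, h1⟩ := hy
  have h₁ : 1 + 2*y ≠ 0 := by linarith
  have h₂ : y + 2 ≠ 0 := by linarith
  have h₃ : 2 - y ≠ 0 := by linarith
  have e₁ : romikInv₁ y * (1 - romikInv₁ y) = y * (1 + y) / (1 + 2*y)^2 := by
    unfold romikInv₁; field_simp; ring
  have e₂ : romikInv₂ y * (1 - romikInv₂ y) = (1 + y) / (y + 2)^2 := by
    unfold romikInv₂; field_simp; ring
  have e₃ : romikInv₃ y * (1 - romikInv₃ y) = (1 - y) / (2 - y)^2 := by
    unfold romikInv₃; field_simp; ring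
  simp only [romikDensity, e₁, e₂, e₃, abs_div, abs_neg, abs_one, abs_pow, sq_abs, one_div_div]
  have : 1 + y ≠ 0 := by linarith
  have : 1 - y ≠ 0 := by linarith
  field_simp
  ring

theorem ofReal_romikDensity_transfer {y : ℝ} (hy : y ∈ Ioo 0 1) :
    ENNReal.ofReal (|1 / (1 + 2*y)^2| * romikDensity (romikInv₁ y))
      + ENNReal.ofReal (|-1 / (y + 2)^2| * romikDensity (romikInv₂ y))
      + ENNReal.ofReal (|1 / (2 - y)^2| * romikDensity (romikInv₃ y))
      = ENNReal.ofReal (romikDensity y) := by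
  have hy' := Ioo_subset_Icc_self hy
  have n₁ := isRomikBranch_romikInv₁.abs_deriv_mul_romikDensity_nonneg hy'
  have n₂ := isRomikBranch_romikInv₂.abs_deriv_mul_romikDensity_nonneg hy'
  have n₃ := isRomikBranch_romikInv₃.abs_deriv_mul_romikDensity_nonneg hy'
  rw [← ENNReal.ofReal_add n₁ n₂, ← ENNReal.ofReal_add (add_nonneg n₁ n₂) n₃,
    romikDensity_transfer hy]

theorem ae_mem_Ioo_of_subset_Icc {A : Set ℝ} {a b : ℝ} (hA : A ⊆ Icc a b) :
    ∀ᵐ y ∂volume.restrict A, y ∈ Ioo a b := by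
  refine ae_restrict_of_ae_restrict_of_subset hA ?_
  rw [← Measure.restrict_congr_set Ioo_ae_eq_Icc]
  exact ae_restrict_mem measurableSet_Ioo

theorem romikMeasure_invariant (A : Set ℝ) (hA : MeasurableSet A)
    (hsub : A ⊆ Set.Icc (0 : ℝ) 1) :
    romikMeasure (romik ⁻¹' A) = romikMeasure A := by
  have h₁ := isRomikBranch_romikInv₁
  have h₂ := isRomikBranch_romikInv₂
  have h₃ := isRomikBranch_romikInv₃
  have hpre : MeasurableSet (romik ⁻¹' A) := measurable_romik hA
  calc romikMeasure (romik ⁻¹' A)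
      = romikMeasure (romik ⁻¹' A ∩ Icc 0 (1/3)) + romikMeasure (romik ⁻¹' A ∩ Icc (1/3) (1/2))
          + romikMeasure (romik ⁻¹' A ∩ Icc (1/2) 1) := by
        rw [measure_inter_Icc_add_inter_Icc hpre (by norm_num) (by norm_num),
          measure_inter_Icc_add_inter_Icc hpre (by norm_num) (by norm_num), romikMeasure_inter_Icc]
    _ = romikMeasure (romikInv₁ '' A) + romikMeasure (romikInv₂ '' A)
          + romikMeasure (romikInv₃ '' A) := by
        rw [h₁.preimage_inter_Icc hsub, h₂.preimage_inter_Icc hsub, h₃.preimage_inter_Icc hsub]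
    _ = ∫⁻ y in A, ENNReal.ofReal (romikDensity y) := by
        rw [h₁.romikMeasure_image hA hsub, h₂.romikMeasure_image hA hsub,
          h₃.romikMeasure_image hA hsub, ← lintegral_add_left (by fun_prop),
          ← lintegral_add_left (by fun_prop)]
        exact lintegral_congr_ae
          ((ae_mem_Ioo_of_subset_Icc hsub).mono fun y hy => ofReal_romikDensity_transfer hy)
    _ = romikMeasure A := by rw [romikMeasure_apply, inter_eq_left.2 hsub]
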